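/- arXiv:1602.01304 — 2 statements merged into one kernel-verified Lean document; each statement's English description precedes it below -/
import Mathlib

section
/- For every integer n ≥ 2 the largest real root λ_n of F_n satisfies m(n) ≤ λ_n ≤ f_1(n), where m(n) = f_1(n)/2 + sqrt(f_1(n)²/4 − f_2(n)). Moreover λ_n < f_1(n) for n ≥ 4 and m(n) < λ_n for n ≥ 6. -/
/-- The polynomial `F_n(λ)` from the paper:
`F_n(λ) = Σ_{j=0}^{ν} (−4)^{j−ν} ((2ν−2j+1)_n / (2j−2ν+n)!) λ^j` with `ν = ⌊n/2⌋`. -/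
noncomputable def Fpoly (n : ℕ) (x : ℝ) : ℝ :=
  ∑ j ∈ Finset.range (n / 2 + 1),
    (-4 : ℝ) ^ ((j : ℤ) - ((n / 2 : ℕ) : ℤ)) *
      ((ascPochhammer ℝ n).eval (2 * ((n / 2 : ℕ) : ℝ) - 2 * (j : ℝ) + 1) /
        (Nat.factorial (n - (2 * (n / 2) - 2 * j)) : ℝ)) * x ^ j

/-- The coefficient `f_j(n) = (n−2j+1)_{4j} / (4^j (2j)!)` from the paper. -/
noncomputable def fcoef (j n : ℕ) : ℝ :=
  (ascPochhammer ℝ (4 * j)).eval ((n : ℝ) - 2 * (j : ℝ) + 1) /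
    (4 ^ j * (Nat.factorial (2 * j) : ℝ))

/-!
Reflecting the sum, `F_n(x) = Σ_{k ≤ ν} (-1)^k f_k(n) x^(ν-k)`. The ratio
`f_{k+1}/f_k = (n-2k-1)(n-2k)(n+2k+1)(n+2k+2) / (4(2k+1)(2k+2))` is at most `f_1/4` for
`k ≥ 1`, so for `x ≥ f_1/2` the terms `f_k x^(ν-k)` strictly decrease from `k = 1` on (from
`k = 0` if `x > f_1`), and an alternating sum of decreasing positive terms is positive. Hence
`F_n > 0` on `(f_1, ∞)`, and also at `f_1` for `n ≥ 4`, where the first two terms cancel. At `m`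
the first three terms cancel and the remaining tail makes `F_n(m) < 0` for `n ≥ 6`, so the
intermediate value theorem gives a root in `(m, f_1]`; for `n < 6` the polynomial `F_n` is
`x - f_1` or `x² - f_1 x + f_2`, and `m` is itself a root.
-/

open Finset

theorem ascPochhammer_succ_left_eval {S : Type*} [CommSemiring S] (m : ℕ) (x : S) :
    (ascPochhammer S (m + 1)).eval x = x * (ascPochhammer S m).eval (x + 1) := by
  simp [ascPochhammer_succ_left, Polynomial.eval_comp]

section Alternating

variable {R : Type*} [CommRing R]

def alternatingPoly (g : ℕ → R) (v : ℕ) (x : R) : R :=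
  ∑ k ∈ range (v + 1), (-1) ^ k * g k * x ^ (v - k)

theorem alternatingPoly_add (g : ℕ → R) (a v : ℕ) (x : R) :
    alternatingPoly g (a + 1 + v) x =
      x ^ (v + 1) * alternatingPoly g a x +
        (-1) ^ (a + 1) * alternatingPoly (fun k => g (a + 1 + k)) v x := by
  unfold alternatingPoly
  rw [show a + 1 + v + 1 = (a + 1) + (v + 1) by ring, sum_range_add, mul_sum, mul_sum]
  congr 1
  · refine sum_congr rfl fun k hk => ?_
    rw [show a + 1 + v - k = (a - k) + (v + 1) by have := mem_range.1 hk; omega, pow_add]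
    ring
  · refine sum_congr rfl fun k _ => ?_
    rw [show a + 1 + v - (a + 1 + k) = v - k by omega, pow_add]
    ring

variable [LinearOrder R] [IsStrictOrderedRing R]

theorem alternating_sum_pos {a : ℕ → R} :
    ∀ {v : ℕ}, (∀ k < v, a (k + 1) < a k) → 0 < a v →
      0 < ∑ k ∈ range (v + 1), (-1) ^ k * a k
  | 0, _, hv => by simpa using hv
  | 1, ha, _ => by simpa [sum_range_succ] using ha 0 one_pos
  | v + 2, ha, hv => by
    have tail : 0 < ∑ k ∈ range (v + 1), (-1) ^ k * a (k + 2) :=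
      alternating_sum_pos (a := fun k => a (k + 2)) (fun k hk => ha (k + 2) (by omega)) hv
    have shift (k : ℕ) : (-1 : R) ^ (k + 1 + 1) * a (k + 1 + 1) = (-1) ^ k * a (k + 2) := by ring
    rw [sum_range_succ', sum_range_succ']
    simp only [shift]
    have := ha 0 (by omega)
    simp only [zero_add, pow_one, pow_zero, neg_mul, one_mul]
    linarith

theorem alternatingPoly_pos {g : ℕ → R} {v : ℕ} {x : R} (hx : 0 < x)
    (hg : ∀ k < v, g (k + 1) < x * g k) (hv : 0 < g v) : 0 < alternatingPoly g v x := by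
  have key := alternating_sum_pos (a := fun k => g k * x ^ (v - k)) (v := v) (fun k hk => ?_)
    (by simpa using hv)
  · simpa only [alternatingPoly, mul_assoc] using key
  · rw [show v - k = v - (k + 1) + 1 by omega, pow_succ]
    calc g (k + 1) * x ^ (v - (k + 1)) < x * g k * x ^ (v - (k + 1)) :=
          mul_lt_mul_of_pos_right (hg k hk) (pow_pos hx _)
      _ = g k * (x ^ (v - (k + 1)) * x) := by ring

end Alternating

theorem fcoef_zero (n : ℕ) : fcoef 0 n = 1 := by simp [fcoef]

theorem fcoef_pos {k n : ℕ} (h : 2 * k ≤ n) : 0 < fcoef k n := by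
  have : (2 * k : ℝ) ≤ n := by exact_mod_cast h
  exact div_pos (ascPochhammer_pos _ _ (by linarith)) (by positivity)

theorem fcoef_succ (k n : ℕ) :
    fcoef (k + 1) n * (4 * (2 * k + 1) * (2 * k + 2)) =
      fcoef k n * ((n - 2 * k - 1) * (n - 2 * k) * (n + 2 * k + 1) * (n + 2 * k + 2)) := by
  have hasc : (ascPochhammer ℝ (4 * (k + 1))).eval ((n : ℝ) - 2 * (k + 1 : ℕ) + 1) =
      (n - 2 * k - 1) * (n - 2 * k) * (ascPochhammer ℝ (4 * k)).eval ((n : ℝ) - 2 * k + 1) *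
        ((n + 2 * k + 1) * (n + 2 * k + 2)) := by
    rw [show 4 * (k + 1) = 4 * k + 1 + 1 + 1 + 1 by ring, ascPochhammer_succ_left_eval,
      ascPochhammer_succ_left_eval, ascPochhammer_succ_eval, ascPochhammer_succ_eval]
    push_cast
    ring_nf
  have hfac : ((2 * (k + 1)).factorial : ℝ) = (2 * k + 2) * (2 * k + 1) * (2 * k).factorial := by
    rw [show 2 * (k + 1) = 2 * k + 1 + 1 by ring, Nat.factorial_succ, Nat.factorial_succ]
    push_cast
    ring
  rw [fcoef, fcoef, hasc, hfac, pow_succ]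
  field_simp

theorem fcoef_one (n : ℕ) : 8 * fcoef 1 n = n * (n + 1) * (n * (n + 1) - 2) := by
  have h := fcoef_succ 0 n
  rw [fcoef_zero] at h
  push_cast at h
  linear_combination h

-- Pair the factors: `(x-u)(x+u+1) = x(x+1) - u(u+1)` and `(x-u-1)(x+u+2) = x(x+1) - (u+1)(u+2)`.
theorem shifted_product_le_sq (x u : ℝ) (hu : 0 ≤ u) (hux : u ≤ x) :
    (x - u - 1) * (x - u) * (x + u + 1) * (x + u + 2) ≤ (x * (x + 1)) ^ 2 := by
  have hA : 0 ≤ (x - u) * (x + u + 1) := by nlinarith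
  have hA' : (x - u) * (x + u + 1) ≤ x * (x + 1) := by nlinarith
  have hB : (x - u - 1) * (x + u + 2) ≤ x * (x + 1) := by nlinarith
  rcases le_or_gt 0 ((x - u - 1) * (x + u + 2)) with hB0 | hB0
  · nlinarith [mul_le_mul hA' hB hB0 (hA.trans hA')]
  · nlinarith [mul_nonpos_of_nonneg_of_nonpos hA hB0.le]

theorem fcoef_succ_le {k n : ℕ} (hk : 1 ≤ k) (h : 2 * k ≤ n) :
    fcoef (k + 1) n ≤ fcoef 1 n / 4 * fcoef k n := by
  have hfk := fcoef_pos h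
  have hn : (2 : ℝ) ≤ n := by exact_mod_cast (by omega : 2 ≤ n)
  have hk' : (1 : ℝ) ≤ k := by exact_mod_cast hk
  have hP := shifted_product_le_sq n (2 * k) (by positivity) (by exact_mod_cast h)
  have ht : ((n : ℝ) * (n + 1)) ^ 2 ≤ 12 * fcoef 1 n := by
    have : (6 : ℝ) ≤ n * (n + 1) := by nlinarith
    nlinarith [fcoef_one n]
  have hsucc :
      fcoef (k + 1) n * (4 * (2 * k + 1) * (2 * k + 2)) ≤ 12 * fcoef 1 n * fcoef k n := by
    rw [fcoef_succ]
    nlinarith [mul_le_mul_of_nonneg_left (hP.trans ht) hfk.le]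
  rcases le_or_gt (fcoef (k + 1) n) 0 with hneg | hpos
  · nlinarith [fcoef_pos (k := 1) (n := n) (by omega)]
  · have h48 : (48 : ℝ) ≤ 4 * (2 * k + 1) * (2 * k + 2) := by nlinarith
    nlinarith [mul_le_mul_of_nonneg_left h48 hpos.le]

theorem fcoef_succ_lt_mul {k n : ℕ} (hk : 1 ≤ k) (h : 2 * k ≤ n) {x : ℝ}
    (hx : fcoef 1 n / 2 ≤ x) : fcoef (k + 1) n < x * fcoef k n := by
  have h1 := fcoef_pos (k := 1) (n := n) (by omega)
  have hfk := fcoef_pos h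
  calc fcoef (k + 1) n ≤ fcoef 1 n / 4 * fcoef k n := fcoef_succ_le hk h
    _ < fcoef 1 n / 2 * fcoef k n := by gcongr; linarith
    _ ≤ x * fcoef k n := by gcongr

theorem Fpoly_coeff {k n : ℕ} (h : 2 * k ≤ n) :
    (-4 : ℝ) ^ (-(k : ℤ)) *
        ((ascPochhammer ℝ n).eval (2 * (k : ℝ) + 1) / ((n - 2 * k).factorial : ℝ)) =
      (-1) ^ k * fcoef k n := by
  have h1 := factorial_mul_ascPochhammer ℝ (2 * k) n
  have h2 := factorial_mul_ascPochhammer ℝ (n - 2 * k) (4 * k)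
  rw [show n - 2 * k + 4 * k = 2 * k + n by omega, ← h1, Nat.cast_sub h] at h2
  push_cast at h2
  rw [fcoef, zpow_neg, zpow_natCast, neg_pow, mul_inv, ← inv_pow, inv_neg_one]
  field_simp
  linear_combination -h2

theorem Fpoly_eq (n : ℕ) (x : ℝ) :
    Fpoly n x = alternatingPoly (fun k => fcoef k n) (n / 2) x := by
  rw [Fpoly, alternatingPoly, ← sum_range_reflect]
  refine sum_congr rfl fun k hk => ?_
  have hk : k ≤ n / 2 := Nat.lt_succ_iff.1 (mem_range.1 hk)
  rw [show n / 2 + 1 - 1 - k = n / 2 - k by omega,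
    show 2 * (n / 2) - 2 * (n / 2 - k) = 2 * k by omega, ← Fpoly_coeff (by omega : 2 * k ≤ n)]
  push_cast [Nat.cast_sub hk]
  ring_nf

theorem continuous_Fpoly (n : ℕ) : Continuous (Fpoly n) := by
  unfold Fpoly
  fun_prop

theorem Fpoly_pos_of_fcoef_one_lt {n : ℕ} (hn : 2 ≤ n) {x : ℝ} (hx : fcoef 1 n < x) :
    0 < Fpoly n x := by
  have h1 := fcoef_pos (k := 1) (n := n) (by omega)
  rw [Fpoly_eq]
  refine alternatingPoly_pos (by linarith) (fun k hk => ?_) (fcoef_pos (by omega))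
  rcases k with _ | k
  · simpa [fcoef_zero] using hx
  · exact fcoef_succ_lt_mul (by omega) (by omega) (by linarith)

theorem Fpoly_fcoef_one_pos {n : ℕ} (hn : 4 ≤ n) : 0 < Fpoly n (fcoef 1 n) := by
  obtain ⟨v, hv⟩ : ∃ v, n / 2 = 1 + 1 + v := ⟨n / 2 - 2, by omega⟩
  have h1 := fcoef_pos (k := 1) (n := n) (by omega)
  have tail : 0 < alternatingPoly (fun k => fcoef (1 + 1 + k) n) v (fcoef 1 n) :=
    alternatingPoly_pos h1
      (fun k hk => fcoef_succ_lt_mul (k := 1 + 1 + k) (by omega) (by omega) (by linarith))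
      (fcoef_pos (by omega))
  have head : alternatingPoly (fun k => fcoef k n) 1 (fcoef 1 n) = 0 := by
    simp [alternatingPoly, sum_range_succ, fcoef_zero]
  rw [Fpoly_eq, hv, alternatingPoly_add, head]
  norm_num
  exact tail

/-- `m(n)`, the larger root of `x² - f₁ x + f₂`, which truncates `F_n` after three terms. -/
noncomputable def mroot (n : ℕ) : ℝ := fcoef 1 n / 2 + √(fcoef 1 n ^ 2 / 4 - fcoef 2 n)

theorem half_fcoef_one_le_mroot (n : ℕ) : fcoef 1 n / 2 ≤ mroot n :=
  le_add_of_nonneg_right (Real.sqrt_nonneg _)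

theorem alternatingPoly_two_mroot {n : ℕ} (hn : 2 ≤ n) :
    alternatingPoly (fun k => fcoef k n) 2 (mroot n) = 0 := by
  have hdisc : 0 ≤ fcoef 1 n ^ 2 / 4 - fcoef 2 n := by
    nlinarith [fcoef_succ_le (k := 1) (n := n) le_rfl hn]
  have hs := Real.sq_sqrt hdisc
  simp only [alternatingPoly, sum_range_succ, fcoef_zero, mroot]
  norm_num
  linear_combination hs

theorem mroot_le_fcoef_one {n : ℕ} (hn : 4 ≤ n) : mroot n ≤ fcoef 1 n := by
  have h1 := fcoef_pos (k := 1) (n := n) (by omega)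
  have h2 := fcoef_pos (k := 2) (n := n) (by omega)
  have : √(fcoef 1 n ^ 2 / 4 - fcoef 2 n) ≤ fcoef 1 n / 2 :=
    Real.sqrt_le_iff.2 ⟨by linarith, by nlinarith⟩
  unfold mroot
  linarith

theorem Fpoly_mroot_neg {n : ℕ} (hn : 6 ≤ n) : Fpoly n (mroot n) < 0 := by
  obtain ⟨v, hv⟩ : ∃ v, n / 2 = 2 + 1 + v := ⟨n / 2 - 3, by omega⟩
  have hm := half_fcoef_one_le_mroot n
  have tail : 0 < alternatingPoly (fun k => fcoef (2 + 1 + k) n) v (mroot n) :=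
    alternatingPoly_pos (by linarith [fcoef_pos (k := 1) (n := n) (by omega)])
      (fun k hk => fcoef_succ_lt_mul (k := 2 + 1 + k) (by omega) (by omega) hm)
      (fcoef_pos (by omega))
  rw [Fpoly_eq, hv, alternatingPoly_add, alternatingPoly_two_mroot (by omega)]
  norm_num
  exact tail

theorem fcoef_two_eq_zero {n : ℕ} (hn : 2 ≤ n) (h : n < 4) : fcoef 2 n = 0 := by
  have hs := fcoef_succ 1 n
  interval_cases n <;> norm_num at hs <;> linarith

theorem Fpoly_mroot_eq_zero {n : ℕ} (hn : 2 ≤ n) (h : n < 6) : Fpoly n (mroot n) = 0 := by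
  rw [Fpoly_eq]
  rcases (by omega : n / 2 = 1 ∨ n / 2 = 2) with hv | hv
  · have h1 := fcoef_pos (k := 1) (n := n) (by omega)
    have hm : mroot n = fcoef 1 n := by
      rw [mroot, fcoef_two_eq_zero hn (by omega), sub_zero,
        show fcoef 1 n ^ 2 / 4 = (fcoef 1 n / 2) ^ 2 by ring, Real.sqrt_sq (by linarith)]
      ring
    simp [hv, alternatingPoly, sum_range_succ, fcoef_zero, hm]
  · rw [hv, alternatingPoly_two_mroot hn]

/-- For `n ≥ 2` the largest real root `λ_n` of `F_n` satisfies `m(n) ≤ λ_n ≤ f_1(n)`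
with `m(n) = f_1(n)/2 + sqrt(f_1(n)²/4 − f_2(n))`; moreover `λ_n < f_1(n)` for `n ≥ 4`
and `m(n) < λ_n` for `n ≥ 6`. -/
theorem maxroot_bounds (n : ℕ) (hn : 2 ≤ n) (lam : ℝ)
    (hlam : IsGreatest {x : ℝ | Fpoly n x = 0} lam) :
    fcoef 1 n / 2 + Real.sqrt ((fcoef 1 n) ^ 2 / 4 - fcoef 2 n) ≤ lam ∧
    lam ≤ fcoef 1 n ∧
    (4 ≤ n → lam < fcoef 1 n) ∧
    (6 ≤ n → fcoef 1 n / 2 + Real.sqrt ((fcoef 1 n) ^ 2 / 4 - fcoef 2 n) < lam) := by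
  obtain ⟨hroot, hmax⟩ := hlam
  change Fpoly n lam = 0 at hroot
  have upper : lam ≤ fcoef 1 n :=
    le_of_not_gt fun h => (Fpoly_pos_of_fcoef_one_lt hn h).ne' hroot
  have upper_strict (h4 : 4 ≤ n) : lam < fcoef 1 n :=
    upper.lt_of_ne fun h => (Fpoly_fcoef_one_pos h4).ne' (h ▸ hroot)
  have lower_strict (h6 : 6 ≤ n) : mroot n < lam := by
    obtain ⟨c, hc, hc0⟩ := intermediate_value_Ioc (mroot_le_fcoef_one (by omega))
      (continuous_Fpoly n).continuousOn
      ⟨Fpoly_mroot_neg h6, (Fpoly_fcoef_one_pos (by omega)).le⟩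
    exact hc.1.trans_le (hmax hc0)
  have lower : mroot n ≤ lam := by
    rcases lt_or_ge n 6 with h6 | h6
    · exact hmax (Fpoly_mroot_eq_zero hn h6)
    · exact (lower_strict h6).le
  exact ⟨lower, upper, upper_strict, lower_strict⟩
end

section
/- For every nonnegative integer n and every real (or indeterminate) μ, the determinant of the n×n matrix with (i,j) entry c^{(1)}_{i,j} = 2 − δ_{i,j}·2μ/(4i−1) (for 1 ≤ i,j ≤ n) equals ((−1)^n / (2^n · (3/4)_n)) · μ^{n−1} · (μ − 2n² − n). -/
/-!
Write `C1 n μ = diagonal d + 2·J` with `d i = -2μ/(4i+3)` and `J` the all-ones matrix. For `μ ≠ 0`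
the matrix determinant lemma gives `det = (∏ d i) (1 + 2 ∑ 1/d i)`, which is the claimed
closed form since `∏ (4i+3) = 4ⁿ (3/4)ₙ` and `∑ (4i+3) = 2n² + n`. Both sides are continuous in
`μ`, so the identity extends to `μ = 0`.
-/

open Matrix Finset

lemma ascPochhammer_eval_eq_prod_range {R : Type*} [CommSemiring R] (n : ℕ) (r : R) :
    (ascPochhammer R n).eval r = ∏ j ∈ range n, (r + j) := by
  induction n with
  | zero => simp
  | succ n ih => rw [ascPochhammer_succ_eval, ih, prod_range_succ]

theorem Matrix.det_diagonal_add_const {ι K : Type*} [Fintype ι] [DecidableEq ι] [Field K]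
    {d : ι → K} (hd : ∀ i, d i ≠ 0) (c : K) :
    (diagonal d + of fun _ _ => c).det = (∏ i, d i) * (1 + c * ∑ i, (d i)⁻¹) := by
  have hunit : IsUnit (diagonal d).det := by
    simpa [det_diagonal, isUnit_iff_ne_zero, prod_ne_zero_iff] using hd
  have hconst : (of fun _ _ => c : Matrix ι ι K) =
      replicateCol Unit (fun _ => c) * replicateRow Unit (fun _ : ι => (1 : K)) := by
    ext; simp [mul_apply]
  have hinv : (diagonal d)⁻¹ = diagonal fun i => (d i)⁻¹ :=
    inv_eq_left_inv (by simp [diagonal_mul_diagonal, hd])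
  rw [hconst, det_add_replicateCol_mul_replicateRow hunit, det_diagonal, hinv, det_unique]
  simp [mul_apply, diagonal_apply, mul_sum, mul_comm]

lemma prod_range_four_mul_add_three (n : ℕ) :
    ∏ i ∈ range n, (4 * (i : ℝ) + 3) = 4 ^ n * (ascPochhammer ℝ n).eval (3 / 4) := by
  calc ∏ i ∈ range n, (4 * (i : ℝ) + 3) = ∏ i ∈ range n, 4 * (3 / 4 + (i : ℝ)) :=
        prod_congr rfl fun i _ => by ring
    _ = _ := by rw [prod_mul_distrib, prod_const, card_range, ascPochhammer_eval_eq_prod_range]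

lemma sum_range_four_mul_add_three (n : ℕ) :
    ∑ i ∈ range n, (4 * (i : ℝ) + 3) = 2 * n ^ 2 + n := by
  induction n with
  | zero => simp
  | succ n ih => rw [sum_range_succ, ih]; push_cast; ring

noncomputable def C1 (n : ℕ) (mu : ℝ) : Matrix (Fin n) (Fin n) ℝ :=
  of fun i j => 2 - (if i = j then 2 * mu / (4 * ((i : ℕ) + 1 : ℝ) - 1) else 0)

lemma C1_eq_diagonal_add_const (n : ℕ) (mu : ℝ) :
    C1 n mu =
      diagonal (fun i : Fin n => -(2 * mu / (4 * ((i : ℕ) + 1 : ℝ) - 1))) + of fun _ _ => 2 := by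
  ext i j
  by_cases h : i = j <;> simp [C1, h]; ring

lemma continuous_det_C1 (n : ℕ) : Continuous fun mu => (C1 n mu).det := by
  simp_rw [C1_eq_diagonal_add_const]
  fun_prop

lemma det_C1_of_ne_zero {n : ℕ} (hn : n ≠ 0) {mu : ℝ} (hmu : mu ≠ 0) :
    (C1 n mu).det = (-1) ^ n / (2 ^ n * (ascPochhammer ℝ n).eval (3 / 4 : ℝ)) *
      mu ^ (n - 1) * (mu - 2 * (n : ℝ) ^ 2 - (n : ℝ)) := by
  have ha : ∀ i : ℕ, 4 * ((i : ℝ) + 1) - 1 = 4 * i + 3 := fun i => by ring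
  have ha_ne : ∀ i : ℕ, (4 * i + 3 : ℝ) ≠ 0 := fun i => by positivity
  rw [C1_eq_diagonal_add_const, det_diagonal_add_const (fun i => by simp [ha, hmu, ha_ne])]
  simp only [ha, Fin.prod_univ_eq_prod_range (fun i => -(2 * mu / (4 * (i : ℝ) + 3))),
    Fin.sum_univ_eq_sum_range (fun i => (-(2 * mu / (4 * (i : ℝ) + 3)))⁻¹)]
  have hprod : ∏ i ∈ range n, -(2 * mu / (4 * (i : ℝ) + 3))
      = (-1) ^ n * 2 ^ n * mu ^ n / ∏ i ∈ range n, (4 * (i : ℝ) + 3) := by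
    simp only [neg_div', prod_div_distrib, prod_const, card_range, neg_pow (2 * mu), mul_pow,
      mul_assoc]
  have hsum : ∑ i ∈ range n, (-(2 * mu / (4 * (i : ℝ) + 3)))⁻¹
      = -(∑ i ∈ range n, (4 * (i : ℝ) + 3)) / (2 * mu) := by
    rw [neg_div, sum_div, ← sum_neg_distrib]
    simp only [inv_neg, inv_div]
  rw [hprod, hsum, prod_range_four_mul_add_three, sum_range_four_mul_add_three]
  obtain ⟨m, rfl⟩ := Nat.exists_eq_add_one_of_ne_zero hn
  field_simp
  rw [show (4 : ℝ) ^ (m + 1) = 2 ^ (m + 1) * 2 ^ (m + 1) by rw [← mul_pow]; norm_num]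
  push_cast
  ring

/-- `det C^{(1)}_n = ((−1)^n/(2^n (3/4)_n)) μ^{n−1} (μ − 2n² − n)`, where the `(i,j)`
entry of `C^{(1)}_n` (for `1 ≤ i,j ≤ n`) is `2 − δ_{i,j} 2μ/(4i−1)`; for `n = 0` both
sides equal `1`. -/
theorem det_C1 (n : ℕ) (mu : ℝ) :
    Matrix.det (Matrix.of (fun i j : Fin n =>
      2 - (if i = j then 2 * mu / (4 * ((i : ℕ) + 1 : ℝ) - 1) else 0)))
    = if n = 0 then 1 else
        (-1) ^ n / (2 ^ n * (ascPochhammer ℝ n).eval (3 / 4 : ℝ)) *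
          mu ^ (n - 1) * (mu - 2 * (n : ℝ) ^ 2 - (n : ℝ)) := by
  rcases eq_or_ne n 0 with rfl | hn
  · simp
  rw [if_neg hn]
  refine congrFun (Continuous.ext_on (dense_compl_singleton 0) (continuous_det_C1 n)
    (by fun_prop) fun mu hmu => det_C1_of_ne_zero hn hmu) mu
end
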